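/- arXiv:2303.00211 — 4 statements merged into one kernel-verified Lean document; each statement's English description precedes it below -/
import Mathlib

section
/- Let L > 0 and T ≥ 1 be an integer. For k ≥ 1 set α_k = 2/(k+1), let Γ_1 = 1 and Γ_k = (1−α_k)Γ_{k−1} for k ≥ 2, set λ = 1/(2L), and let γ_k ∈ [λ, (1+α_k/4)λ] for each k. Then for every 1 ≤ k ≤ T, the quantity C_k := 1 − Lγ_k − (L(γ_k−λ)²/(2 α_k Γ_k γ_k)) · ∑_{τ=k}^{T} Γ_τ satisfies C_k ≥ 11/32. -/
/-!
Solving the recursion gives `Γₖ = 2/(k(k+1))`, and the tail sums telescope: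
`∑_{τ=k}^{T} Γτ = 2/k - 2/(T+1) ≤ 2/k`. Since `αₖ ≤ 1`, `Lγₖ ≤ (1 + 1/4)/2 = 5/8`; and since
`0 ≤ γₖ - λ ≤ λ/(2(k+1))` and `γₖ ≥ λ`, the correction term is at most `Lλ/16 = 1/32`.
-/

open Finset

lemma eq_two_div_mul_succ_of_rec (Γ : ℕ → ℝ) (hΓ1 : Γ 1 = 1)
    (hΓ : ∀ k : ℕ, 2 ≤ k → Γ k = (1 - 2 / ((k : ℝ) + 1)) * Γ (k - 1)) :
    ∀ k : ℕ, 1 ≤ k → Γ k = 2 / ((k : ℝ) * ((k : ℝ) + 1)) := by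
  intro k hk
  induction k, hk using Nat.le_induction with
  | base => rw [hΓ1]; norm_num
  | succ m hm ih =>
    have hm0 : (0 : ℝ) < m := by exact_mod_cast hm
    rw [hΓ (m + 1) (by omega), Nat.add_sub_cancel, ih]
    push_cast
    field_simp
    ring

lemma sum_Icc_two_div_mul_succ {k N : ℕ} (hk : 1 ≤ k) (hkN : k ≤ N) :
    ∑ τ ∈ Icc k N, 2 / ((τ : ℝ) * ((τ : ℝ) + 1)) = 2 / (k : ℝ) - 2 / ((N : ℝ) + 1) := by
  induction N, hkN using Nat.le_induction with
  | base =>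
    have hk0 : (0 : ℝ) < k := by exact_mod_cast hk
    rw [Icc_self, sum_singleton]
    field_simp
    ring
  | succ n hn ih =>
    rw [sum_Icc_succ_top (by omega), ih]
    push_cast
    field_simp
    ring

section Stepsize

variable {L n γ : ℝ}

lemma mul_le_five_div_eight_of_mem_Icc (hL : 0 < L) (hn : 1 ≤ n)
    (hγ : γ ∈ Set.Icc (1 / (2 * L)) ((1 + 2 / (n + 1) / 4) * (1 / (2 * L)))) :
    L * γ ≤ 5 / 8 := by
  have hα : 2 / (n + 1) ≤ 1 := (div_le_one (by linarith)).mpr (by linarith)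
  calc L * γ ≤ L * ((1 + 1 / 4) * (1 / (2 * L))) := by
        gcongr
        exact hγ.2.trans (by gcongr)
    _ = 5 / 8 := by field_simp; ring

lemma correction_le_one_div_thirtytwo {S : ℝ} (hL : 0 < L) (hn : 0 < n)
    (hγ : γ ∈ Set.Icc (1 / (2 * L)) ((1 + 2 / (n + 1) / 4) * (1 / (2 * L))))
    (hS0 : 0 ≤ S) (hS : S ≤ 2 / n) :
    L * (γ - 1 / (2 * L)) ^ 2 / (2 * (2 / (n + 1)) * (2 / (n * (n + 1))) * γ) * S
      ≤ 1 / 32 := by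
  set lam := 1 / (2 * L) with hlam
  have hlam0 : 0 < lam := by positivity
  have hgap0 : 0 ≤ γ - lam := sub_nonneg.mpr hγ.1
  have hgap : γ - lam ≤ lam / (2 * (n + 1)) := by
    have : (1 + 2 / (n + 1) / 4) * lam = lam + lam / (2 * (n + 1)) := by
      field_simp; ring
    linarith [hγ.2]
  have hD : 0 < 2 * (2 / (n + 1)) * (2 / (n * (n + 1))) * γ := by
    have : 0 < γ := hlam0.trans_le hγ.1
    positivity
  rw [div_mul_eq_mul_div, div_le_iff₀ hD]
  calc L * (γ - lam) ^ 2 * S ≤ L * (lam / (2 * (n + 1))) ^ 2 * (2 / n) := by gcongr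
    -- uses `Lλ = 1/2`
    _ = 1 / 32 * (2 * (2 / (n + 1)) * (2 / (n * (n + 1))) * lam) := by
        rw [hlam]; field_simp; ring
    _ ≤ 1 / 32 * (2 * (2 / (n + 1)) * (2 / (n * (n + 1))) * γ) := by gcongr; exact hγ.1

end Stepsize

theorem stmt3_general (L : ℝ) (hL : 0 < L) (T : ℕ)
    (α Γ γ : ℕ → ℝ) (lam : ℝ)
    (hα : ∀ k : ℕ, 1 ≤ k → α k = 2 / ((k : ℝ) + 1))
    (hΓ1 : Γ 1 = 1) (hΓ : ∀ k : ℕ, 2 ≤ k → Γ k = (1 - α k) * Γ (k - 1))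
    (hlam : lam = 1 / (2 * L))
    (hγ : ∀ k, γ k ∈ Set.Icc lam ((1 + α k / 4) * lam)) :
    ∀ k : ℕ, 1 ≤ k → k ≤ T →
      (11 : ℝ) / 32 ≤
        1 - L * γ k -
          L * (γ k - lam) ^ 2 / (2 * α k * Γ k * γ k) * ∑ τ ∈ Finset.Icc k T, Γ τ := by
  intro k hk hkT
  subst hlam
  have hΓeq := eq_two_div_mul_succ_of_rec Γ hΓ1 fun j hj => by rw [hΓ j hj, hα j (by omega)]
  have hk1 : (1 : ℝ) ≤ k := by exact_mod_cast hk
  have hsum : ∑ τ ∈ Icc k T, Γ τ = 2 / (k : ℝ) - 2 / ((T : ℝ) + 1) := by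
    rw [sum_congr rfl fun τ hτ => hΓeq τ (hk.trans (mem_Icc.mp hτ).1)]
    exact sum_Icc_two_div_mul_succ hk hkT
  have hT : (k : ℝ) ≤ T := by exact_mod_cast hkT
  have hS0 : 0 ≤ 2 / (k : ℝ) - 2 / ((T : ℝ) + 1) :=
    sub_nonneg.mpr (div_le_div_of_nonneg_left (by norm_num) (by positivity) (by linarith))
  have hS : 2 / (k : ℝ) - 2 / ((T : ℝ) + 1) ≤ 2 / k :=
    sub_le_self _ (by positivity)
  have hγk := hγ k
  rw [hα k hk] at hγk ⊢
  rw [hΓeq k hk, hsum]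
  linarith [mul_le_five_div_eight_of_mem_Icc hL hk1 hγk,
    correction_le_one_div_thirtytwo hL (by linarith) hγk hS0 hS]

/-- With `L > 0`, `T ≥ 1`, `αₖ = 2/(k+1)`, `Γ₁ = 1`, `Γₖ = (1−αₖ)Γ_{k−1}` for `k ≥ 2`,
`λ = 1/(2L)` and `γₖ ∈ [λ, (1+αₖ/4)λ]`, the quantity
`Cₖ = 1 − Lγₖ − (L(γₖ−λ)²/(2αₖΓₖγₖ))·∑_{τ=k}^{T} Γτ` satisfies `Cₖ ≥ 11/32`
for every `1 ≤ k ≤ T`. -/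
theorem stmt3 (L : ℝ) (hL : 0 < L) (T : ℕ) (hT : 1 ≤ T)
    (α Γ γ : ℕ → ℝ) (lam : ℝ)
    (hα : ∀ k : ℕ, 1 ≤ k → α k = 2 / ((k : ℝ) + 1))
    (hΓ1 : Γ 1 = 1) (hΓ : ∀ k : ℕ, 2 ≤ k → Γ k = (1 - α k) * Γ (k - 1))
    (hlam : lam = 1 / (2 * L))
    (hγ : ∀ k, γ k ∈ Set.Icc lam ((1 + α k / 4) * lam)) :
    ∀ k : ℕ, 1 ≤ k → k ≤ T →
      (11 : ℝ) / 32 ≤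
        1 - L * γ k -
          L * (γ k - lam) ^ 2 / (2 * α k * Γ k * γ k) * ∑ τ ∈ Finset.Icc k T, Γ τ :=
  stmt3_general L hL T α Γ γ lam hα hΓ1 hΓ hlam hγ
end

section
/- Let α_0 = 1 and α_k ∈ (0,1) for k ≥ 1, Γ_0 = 1 and Γ_k = (1−α_k)Γ_{k−1} for k ≥ 1. Let (γ_k), (λ_k) be real sequences, (g_k) ⊂ ℝ^n, and suppose (d_k) ⊂ ℝ^n satisfies d_{k+1} = (1−α_k) d_k + (γ_k − λ_k) g_k for all k ≥ 0, with d_0 ∈ ℝ^n arbitrary. Then for every k ≥ 0, ‖d_{k+1}‖² ≤ Γ_k ∑_{τ=0}^{k} ((γ_τ − λ_τ)²/(Γ_τ α_τ)) ‖g_τ‖². -/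
/-!
The update is the convex combination `(1 - αₖ) • dₖ + αₖ • ((γₖ - λₖ) / αₖ) • gₖ`, so convexity of
`‖·‖²` gives `‖d_{k+1}‖² ≤ (1 - αₖ) ‖dₖ‖² + (γₖ - λₖ)² / αₖ ‖gₖ‖²`. Dividing by `Γₖ` makes this
recursion telescope, and `α₀ = 1` removes the arbitrary starting point `d₀`.
-/

open Finset

theorem norm_one_sub_smul_add_smul_sq_le {E : Type*} [SeminormedAddCommGroup E] [NormedSpace ℝ E]
    {a : ℝ} (ha₀ : 0 < a) (ha₁ : a ≤ 1) (c : ℝ) (x y : E) :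
    ‖(1 - a) • x + c • y‖ ^ 2 ≤ (1 - a) * ‖x‖ ^ 2 + c ^ 2 / a * ‖y‖ ^ 2 := by
  have hconv : ConvexOn ℝ Set.univ (fun v : E ↦ ‖v‖ ^ 2) :=
    convexOn_univ_norm.pow (fun _ _ ↦ norm_nonneg _) 2
  have hy : c • y = a • ((c / a) • y) := by rw [smul_smul, mul_div_cancel₀ _ ha₀.ne']
  calc ‖(1 - a) • x + c • y‖ ^ 2 ≤ (1 - a) * ‖x‖ ^ 2 + a * ‖(c / a) • y‖ ^ 2 := by
        rw [hy]
        exact hconv.2 trivial trivial (by linarith) ha₀.le (by ring)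
    _ = (1 - a) * ‖x‖ ^ 2 + c ^ 2 / a * ‖y‖ ^ 2 := by
        rw [norm_smul, mul_pow, Real.norm_eq_abs, sq_abs]
        field_simp

theorem pos_of_forall_succ_eq_one_sub_mul {α Γ : ℕ → ℝ} (hα : ∀ k, α (k + 1) < 1)
    (hΓ0 : 0 < Γ 0) (hΓ : ∀ k, Γ (k + 1) = (1 - α (k + 1)) * Γ k) : ∀ k, 0 < Γ k
  | 0 => hΓ0
  | k + 1 => by
    rw [hΓ k]
    exact mul_pos (sub_pos.2 (hα k)) (pos_of_forall_succ_eq_one_sub_mul hα hΓ0 hΓ k)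

theorem le_mul_sum_div_of_le_one_sub_mul_add {α Γ β e : ℕ → ℝ} (hα0 : α 0 = 1)
    (hα : ∀ k, α (k + 1) < 1) (hΓ0 : Γ 0 = 1) (hΓ : ∀ k, Γ (k + 1) = (1 - α (k + 1)) * Γ k)
    (he : ∀ k, e (k + 1) ≤ (1 - α k) * e k + β k) :
    ∀ k, e (k + 1) ≤ Γ k * ∑ τ ∈ range (k + 1), β τ / Γ τ
  | 0 => by simpa [hα0, hΓ0] using he 0
  | k + 1 => by
    have hΓpos := pos_of_forall_succ_eq_one_sub_mul hα (hΓ0 ▸ one_pos) hΓ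
    have ih := le_mul_sum_div_of_le_one_sub_mul_add hα0 hα hΓ0 hΓ he k
    calc e (k + 2) ≤ (1 - α (k + 1)) * e (k + 1) + β (k + 1) := he (k + 1)
      _ ≤ (1 - α (k + 1)) * (Γ k * ∑ τ ∈ range (k + 1), β τ / Γ τ) + β (k + 1) := by
        gcongr
        exact sub_nonneg.2 (hα k).le
      _ = Γ (k + 1) * ∑ τ ∈ range (k + 2), β τ / Γ τ := by
        rw [sum_range_succ _ (k + 1), mul_add, mul_div_cancel₀ _ (hΓpos (k + 1)).ne', hΓ k,
          mul_assoc]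

/-- If `α₀ = 1`, `αₖ ∈ (0,1)` for `k ≥ 1`, `Γ₀ = 1`, `Γₖ = (1−αₖ)Γ_{k−1}` for `k ≥ 1`,
and `d_{k+1} = (1−αₖ)dₖ + (γₖ−λₖ)gₖ`, then
`‖d_{k+1}‖² ≤ Γₖ ∑_{τ=0}^{k} ((γτ−λτ)²/(Γτ ατ)) ‖gτ‖²` for every `k ≥ 0`. -/
theorem stmt5 {n : ℕ} (α Γ γ lam : ℕ → ℝ)
    (hα0 : α 0 = 1) (hα : ∀ k, 1 ≤ k → α k ∈ Set.Ioo (0 : ℝ) 1)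
    (hΓ0 : Γ 0 = 1) (hΓ : ∀ k, 1 ≤ k → Γ k = (1 - α k) * Γ (k - 1))
    (g d : ℕ → EuclideanSpace ℝ (Fin n))
    (hd : ∀ k, d (k + 1) = (1 - α k) • d k + (γ k - lam k) • g k) :
    ∀ k : ℕ,
      ‖d (k + 1)‖ ^ 2 ≤
        Γ k * ∑ τ ∈ Finset.range (k + 1), (γ τ - lam τ) ^ 2 / (Γ τ * α τ) * ‖g τ‖ ^ 2 := by
  have hα_mem : ∀ k, 0 < α k ∧ α k ≤ 1 := fun
    | 0 => by simp [hα0]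
    | k + 1 => ⟨(hα (k + 1) k.succ_pos).1, (hα (k + 1) k.succ_pos).2.le⟩
  have hstep : ∀ k, ‖d (k + 1)‖ ^ 2 ≤
      (1 - α k) * ‖d k‖ ^ 2 + (γ k - lam k) ^ 2 / α k * ‖g k‖ ^ 2 := fun k ↦ by
    rw [hd k]
    exact norm_one_sub_smul_add_smul_sq_le (hα_mem k).1 (hα_mem k).2 _ _ _
  intro k
  convert le_mul_sum_div_of_le_one_sub_mul_add (e := fun k ↦ ‖d k‖ ^ 2) hα0
    (fun k ↦ (hα (k + 1) k.succ_pos).2) hΓ0 (fun k ↦ hΓ (k + 1) k.succ_pos) hstep k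
    using 3 with τ
  ring
end

section
/- Let 𝓛 : ℝ^n × ℝ^m → ℝ be differentiable in its first argument with ‖∇_x 𝓛(x,y) − ∇_x 𝓛(x̄,y)‖ ≤ L_xx ‖x − x̄‖ for all x, x̄ ∈ ℝ^n and y ∈ ℝ^m. Fix α ∈ [0,1], γ > 0, x̃, x ∈ ℝ^n and y ∈ ℝ^m, and set z = (1−α)x̃ + αx and x⁺ = x − γ ∇_x 𝓛(z, y). Then 𝓛(x⁺, y) ≤ 𝓛(x, y) − γ(1 − L_xx γ)‖∇_x 𝓛(z, y)‖² + (L_xx (1−α)²/2)‖x̃ − x‖². -/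
open RealInnerProductSpace

/-!
At the point `a + t (b - a)`, the derivative of `f` in direction `b - a` exceeds its value at `a`
by at most `K t ‖b - a‖²`; integrating over `t ∈ [0, 1]` gives the descent lemma
`f b ≤ f a + ⟪∇f a, b - a⟫ + K/2 ‖b - a‖²`. Applied at `x` with the step `-γ ∇f z`, the
inner product `⟪∇f x, ∇f z⟫` differs from `‖∇f z‖²` by at most `K ‖x - z‖ ‖γ ∇f z‖`, and AM-GM
splits this error into `K/2 ‖x - z‖² + K/2 γ² ‖∇f z‖²`. Finally `x - z = (1 - α)(x - x̃)`.
-/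

section DescentLemma

variable {F : Type*} [NormedAddCommGroup F] [InnerProductSpace ℝ F] [CompleteSpace F]
  {f : F → ℝ} {g : F → F} {K : ℝ}

theorem HasGradientAt.hasDerivAt_comp_add_smul {f' a v : F} {t : ℝ}
    (hf : HasGradientAt f f' (a + t • v)) :
    HasDerivAt (fun s : ℝ => f (a + s • v)) ⟪f', v⟫ t := by
  have hline : HasDerivAt (fun s : ℝ => a + s • v) v t := by
    simpa using ((hasDerivAt_id t).smul_const v).const_add a
  simpa [InnerProductSpace.toDual_apply_apply, Function.comp_def]
    using hf.hasFDerivAt.comp_hasDerivAt t hline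

theorem le_add_inner_add_of_lipschitz_gradient (hg : ∀ u, HasGradientAt f (g u) u)
    (hLip : ∀ u v, ‖g u - g v‖ ≤ K * ‖u - v‖) (a b : F) :
    f b ≤ f a + ⟪g a, b - a⟫ + K / 2 * ‖b - a‖ ^ 2 := by
  set v := b - a
  have hderiv (t : ℝ) : HasDerivAt (fun s : ℝ => f (a + s • v) - s * ⟪g a, v⟫)
      (⟪g (a + t • v), v⟫ - ⟪g a, v⟫) t :=
    (hg _).hasDerivAt_comp_add_smul.sub (by simpa using (hasDerivAt_id t).mul_const ⟪g a, v⟫)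
  have hbound (t : ℝ) (ht : t ∈ Set.Ico (0 : ℝ) 1) :
      ⟪g (a + t • v), v⟫ - ⟪g a, v⟫ ≤ K * t * ‖v‖ ^ 2 :=
    calc ⟪g (a + t • v), v⟫ - ⟪g a, v⟫ = ⟪g (a + t • v) - g a, v⟫ := (inner_sub_left ..).symm
      _ ≤ ‖g (a + t • v) - g a‖ * ‖v‖ := real_inner_le_norm _ _
      _ ≤ K * ‖a + t • v - a‖ * ‖v‖ := by gcongr; exact hLip _ _
      _ = K * t * ‖v‖ ^ 2 := by
        rw [add_sub_cancel_left, norm_smul, Real.norm_of_nonneg ht.1]; ring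
  have hB (t : ℝ) : HasDerivAt (fun s : ℝ => f a + K / 2 * s ^ 2 * ‖v‖ ^ 2)
      (K * t * ‖v‖ ^ 2) t := by
    refine ((((hasDerivAt_pow 2 t).const_mul (K / 2)).mul_const (‖v‖ ^ 2)).const_add
      (f a)).congr_deriv ?_
    push_cast
    ring
  have key := image_le_of_deriv_right_le_deriv_boundary
    (fun t _ => (hderiv t).continuousAt.continuousWithinAt)
    (fun t _ => (hderiv t).hasDerivWithinAt) (by simp)
    (fun t _ => (hB t).continuousAt.continuousWithinAt)
    (fun t _ => (hB t).hasDerivWithinAt) hbound (Set.right_mem_Icc.2 zero_le_one)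
  rw [one_smul, add_sub_cancel a b, one_pow, mul_one, one_mul] at key
  linarith

theorem le_sub_of_gradient_step (hg : ∀ u, HasGradientAt f (g u) u) (hK : 0 ≤ K)
    (hLip : ∀ u v, ‖g u - g v‖ ≤ K * ‖u - v‖) (x z : F) (γ : ℝ) :
    f (x - γ • g z) ≤ f x - γ * (1 - K * γ) * ‖g z‖ ^ 2 + K / 2 * ‖x - z‖ ^ 2 := by
  set w := γ • g z
  have hdesc := le_add_inner_add_of_lipschitz_gradient hg hLip x (x - w)
  have hinner : ⟪g x, -w⟫ = -(γ * ‖g z‖ ^ 2) - ⟪g x - g z, w⟫ := by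
    simp only [w, inner_neg_right, inner_sub_left, real_inner_smul_right,
      real_inner_self_eq_norm_sq]
    ring
  have hw : ‖w‖ ^ 2 = γ ^ 2 * ‖g z‖ ^ 2 := by
    rw [norm_smul, mul_pow, Real.norm_eq_abs, sq_abs]
  have herror : -⟪g x - g z, w⟫ ≤ K * ‖x - z‖ * ‖w‖ :=
    calc -⟪g x - g z, w⟫ ≤ ‖g x - g z‖ * ‖w‖ :=
          (neg_le_abs _).trans (abs_real_inner_le_norm _ _)
      _ ≤ K * ‖x - z‖ * ‖w‖ := by gcongr; exact hLip x z
  have hamgm : K * ‖x - z‖ * ‖w‖ ≤ K / 2 * ‖x - z‖ ^ 2 + K / 2 * ‖w‖ ^ 2 := by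
    linarith [mul_nonneg hK (sq_nonneg (‖x - z‖ - ‖w‖))]
  rw [sub_sub_cancel_left, norm_neg, hinner, hw] at hdesc
  rw [hw] at hamgm
  linarith

end DescentLemma

theorem stmt7_general {n m : ℕ}
    (L : EuclideanSpace ℝ (Fin n) → EuclideanSpace ℝ (Fin m) → ℝ)
    (gx : EuclideanSpace ℝ (Fin n) → EuclideanSpace ℝ (Fin m) → EuclideanSpace ℝ (Fin n))
    (hgx : ∀ x y, HasGradientAt (fun x' => L x' y) (gx x y) x)
    (Lxx : ℝ) (hLxx : 0 ≤ Lxx)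
    (hLip : ∀ x xb y, ‖gx x y - gx xb y‖ ≤ Lxx * ‖x - xb‖)
    (α γ : ℝ)
    (xt x : EuclideanSpace ℝ (Fin n)) (y : EuclideanSpace ℝ (Fin m))
    (z xp : EuclideanSpace ℝ (Fin n))
    (hz : z = (1 - α) • xt + α • x)
    (hxp : xp = x - γ • gx z y) :
    L xp y ≤ L x y - γ * (1 - Lxx * γ) * ‖gx z y‖ ^ 2
      + Lxx * (1 - α) ^ 2 / 2 * ‖xt - x‖ ^ 2 := by
  have hxz : ‖x - z‖ ^ 2 = (1 - α) ^ 2 * ‖xt - x‖ ^ 2 := by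
    rw [hz, show x - ((1 - α) • xt + α • x) = (1 - α) • (x - xt) by module, norm_smul,
      mul_pow, Real.norm_eq_abs, sq_abs, norm_sub_rev]
  have hstep := le_sub_of_gradient_step (fun u => hgx u y) hLxx (fun u v => hLip u v y) x z γ
  rw [hxz] at hstep
  rw [hxp]
  linarith

/-- One-step primal descent: with `z = (1−α)x̃ + αx` and `x⁺ = x − γ∇ₓ𝓛(z,y)`,
`𝓛(x⁺,y) ≤ 𝓛(x,y) − γ(1 − Lxx γ)‖∇ₓ𝓛(z,y)‖² + (Lxx(1−α)²/2)‖x̃ − x‖²`. -/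
theorem stmt7 {n m : ℕ}
    (L : EuclideanSpace ℝ (Fin n) → EuclideanSpace ℝ (Fin m) → ℝ)
    (gx : EuclideanSpace ℝ (Fin n) → EuclideanSpace ℝ (Fin m) → EuclideanSpace ℝ (Fin n))
    (hgx : ∀ x y, HasGradientAt (fun x' => L x' y) (gx x y) x)
    (Lxx : ℝ) (hLxx : 0 ≤ Lxx)
    (hLip : ∀ x xb y, ‖gx x y - gx xb y‖ ≤ Lxx * ‖x - xb‖)
    (α γ : ℝ) (hα : α ∈ Set.Icc (0 : ℝ) 1) (hγ : 0 < γ)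
    (xt x : EuclideanSpace ℝ (Fin n)) (y : EuclideanSpace ℝ (Fin m))
    (z xp : EuclideanSpace ℝ (Fin n))
    (hz : z = (1 - α) • xt + α • x)
    (hxp : xp = x - γ • gx z y) :
    L xp y ≤ L x y - γ * (1 - Lxx * γ) * ‖gx z y‖ ^ 2
      + Lxx * (1 - α) ^ 2 / 2 * ‖xt - x‖ ^ 2 :=
  stmt7_general L gx hgx Lxx hLxx hLip α γ xt x y z xp hz hxp
end

section
/- In addition to the hypotheses of the cumulative descent inequality for the PDM primal iterates (z_{k+1} = (1−α_k)x̃_k + α_k x_k, x_{k+1} = x_k − γ_k ∇_x 𝓛(z_{k+1}, y_{k+1}), x̃_{k+1} = z_{k+1} − λ_k ∇_x 𝓛(z_{k+1}, y_{k+1}), with α_0 = 1, α_k ∈ (0,1), Γ_0 = 1, Γ_k = (1−α_k)Γ_{k−1}, γ_k, λ_k > 0, ∇_x 𝓛 being L_xx-Lipschitz in x uniformly in y), assume that 𝓛 satisfies the one-sided PL condition with constant μ > 0, that for each y the infimum inf_{x'} 𝓛(x', y) is attained, and that γ_k C_k ≥ 0 for all k, where C_k := 1 − L_xx γ_k − (L_xx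 (γ_k−λ_k)²/(2 α_k Γ_k γ_k)) ∑_{τ=k}^{T−1} Γ_τ. Then ∑_{k=0}^{T−1} (𝓛(x_{k+1}, y_{k+1}) − 𝓛(x_k, y_{k+1})) ≤ − ∑_{k=0}^{T−1} γ_k C_k μ (𝓛(z_{k+1}, y_{k+1}) − inf_{x'} 𝓛(x', y_{k+1})) − ∑_{k=0}^{T−1} (γ_k C_k/2) ‖∇_x 𝓛(z_{k+1}, y_{k+1})‖². -/
/-!
Along the step `x_{k+1} = x_k - γ_k ∇ₓ𝓛(z_{k+1})` the descent lemma at `x_k`, the Lipschitz bound on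
`∇ₓ𝓛(x_k) - ∇ₓ𝓛(z_{k+1})` and AM-GM show that `𝓛` decreases by at least
`γ_k (1 - L γ_k) ‖∇ₓ𝓛(z_{k+1})‖²` up to an error `(L/2) ‖x_k - z_{k+1}‖²`. Since `x_k - z_{k+1} = (1 - α_k)(x_k - x̃_k)` and
`x_{k+1} - x̃_{k+1} = (1 - α_k)(x_k - x̃_k) + (λ_k - γ_k) ∇ₓ𝓛(z_{k+1})`, convexity of `‖·‖²` bounds
this error by `Γ_k ∑_{τ<k} (λ_τ - γ_τ)² ‖∇ₓ𝓛(z_{τ+1})‖² / (α_τ Γ_τ)`. Summing over `k` and exchanging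
the order of summation turns the errors into the correction term of `C_k`, and the PL inequality
splits `-γ_k C_k ‖∇ₓ𝓛(z_{k+1})‖²` into the two sums on the right.
-/

open RealInnerProductSpace Finset
open scoped NNReal

section

variable {E : Type*} [NormedAddCommGroup E] [InnerProductSpace ℝ E]

theorem image_le_add_inner_add_of_lipschitzWith_gradient [CompleteSpace E] {f : E → ℝ}
    {g : E → E} {K : ℝ≥0} (hf : ∀ p, HasGradientAt f (g p) p) (hg : LipschitzWith K g)
    (v u : E) : f u ≤ f v + ⟪g v, u - v⟫ + K / 2 * ‖u - v‖ ^ 2 := by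
  set φ : ℝ → ℝ := fun t =>
    f (v + t • (u - v)) - t * ⟪g v, u - v⟫ - K / 2 * t ^ 2 * ‖u - v‖ ^ 2
  have hφ' : ∀ t, HasDerivAt φ
      (⟪g (v + t • (u - v)), u - v⟫ - ⟪g v, u - v⟫ - K * t * ‖u - v‖ ^ 2) t := by
    intro t
    have hline : HasDerivAt (fun s : ℝ => v + s • (u - v)) (u - v) t := by
      simpa using ((hasDerivAt_id t).smul_const (u - v)).const_add v
    have hfline := (hf _).hasFDerivAt.comp_hasDerivAt t hline
    simp only [InnerProductSpace.toDual_apply_apply] at hfline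
    exact ((hfline.sub ((hasDerivAt_id t).mul_const ⟪g v, u - v⟫)).sub
      (((hasDerivAt_pow 2 t).const_mul (K / 2 : ℝ)).mul_const (‖u - v‖ ^ 2))).congr_deriv
      (by simp only [one_mul, Nat.cast_ofNat]; ring)
  have hanti : AntitoneOn φ (Set.Ici 0) := by
    refine antitoneOn_of_hasDerivWithinAt_nonpos (convex_Ici 0)
      (fun t _ => (hφ' t).continuousAt.continuousWithinAt)
      (fun t _ => (hφ' t).hasDerivWithinAt) fun t ht => ?_
    rw [interior_Ici, Set.mem_Ioi] at ht
    have hgap : ‖g (v + t • (u - v)) - g v‖ ≤ K * (t * ‖u - v‖) := by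
      simpa [norm_smul, abs_of_pos ht] using hg.norm_sub_le (v + t • (u - v)) v
    have := real_inner_le_norm (g (v + t • (u - v)) - g v) (u - v)
    rw [inner_sub_left] at this
    nlinarith [norm_nonneg (u - v)]
  have hφ₀ : φ 0 = f v := by simp [φ]
  have hφ₁ : φ 1 = f u - ⟪g v, u - v⟫ - K / 2 * ‖u - v‖ ^ 2 := by simp [φ]
  linarith [hanti Set.self_mem_Ici (Set.mem_Ici.2 zero_le_one) zero_le_one]

theorem image_sub_smul_sub_le_of_lipschitzWith_gradient [CompleteSpace E] {f : E → ℝ}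
    {g : E → E} {K : ℝ≥0} (hf : ∀ p, HasGradientAt f (g p) p) (hg : LipschitzWith K g)
    {γ : ℝ} (hγ : 0 ≤ γ) (v z : E) :
    f (v - γ • g z) - f v ≤ -(γ * (1 - K * γ)) * ‖g z‖ ^ 2 + K / 2 * ‖v - z‖ ^ 2 := by
  have hdesc := image_le_add_inner_add_of_lipschitzWith_gradient hf hg v (v - γ • g z)
  have hsplit : ⟪g v, v - γ • g z - v⟫ = -γ * (‖g z‖ ^ 2 + ⟪g v - g z, g z⟫) := by
    rw [sub_sub_cancel_left, inner_neg_right, real_inner_smul_right, inner_sub_left,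
      real_inner_self_eq_norm_sq]
    ring
  have hnorm : ‖v - γ • g z - v‖ ^ 2 = γ ^ 2 * ‖g z‖ ^ 2 := by
    rw [sub_sub_cancel_left, norm_neg, norm_smul, Real.norm_eq_abs, mul_pow, sq_abs]
  have hcs : -(K * ‖v - z‖ * ‖g z‖) ≤ ⟪g v - g z, g z⟫ :=
    le_trans (neg_le_neg (mul_le_mul_of_nonneg_right (hg.norm_sub_le v z) (norm_nonneg _)))
      (neg_le_of_abs_le (abs_real_inner_le_norm _ _))
  -- AM-GM: `2 γ ‖v - z‖ ‖g z‖ ≤ ‖v - z‖ ^ 2 + γ ^ 2 ‖g z‖ ^ 2`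
  have hamgm := mul_nonneg K.coe_nonneg (sq_nonneg (‖v - z‖ - γ * ‖g z‖))
  rw [hsplit, hnorm] at hdesc
  nlinarith [mul_le_mul_of_nonneg_left hcs hγ]

theorem norm_one_sub_smul_add_smul_sq_le_s9 {α : ℝ} (hα₀ : 0 < α) (hα₁ : α ≤ 1) (c : ℝ)
    (a b : E) : ‖(1 - α) • a + c • b‖ ^ 2 ≤ (1 - α) * ‖a‖ ^ 2 + c ^ 2 / α * ‖b‖ ^ 2 := by
  have hconv := ((convexOn_norm (E := E) convex_univ).pow (fun _ _ => norm_nonneg _) 2).2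
    (Set.mem_univ a) (Set.mem_univ ((c / α) • b)) (sub_nonneg.2 hα₁) hα₀.le (by ring)
  simp only [Pi.pow_apply, smul_eq_mul, smul_smul] at hconv
  rw [mul_div_cancel₀ c hα₀.ne', norm_smul, mul_pow, Real.norm_eq_abs, sq_abs] at hconv
  calc _ ≤ _ := hconv
    _ = _ := by field_simp

theorem one_sub_mul_le_mul_sum_div_of_le_one_sub_mul_add {D W α Γ : ℕ → ℝ} {T : ℕ}
    (hD₀ : D 0 = 0) (hD : ∀ k < T, D (k + 1) ≤ (1 - α k) * D k + W k)
    (hα : ∀ k < T, α k ≤ 1) (hΓpos : ∀ k < T, 0 < Γ k)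
    (hΓ : ∀ k, k + 1 < T → Γ (k + 1) = (1 - α (k + 1)) * Γ k) :
    ∀ k < T, (1 - α k) * D k ≤ Γ k * ∑ τ ∈ range k, W τ / Γ τ := by
  intro k
  induction k with
  | zero => simp [hD₀]
  | succ k ih =>
    intro hk
    have hα' : 0 ≤ 1 - α (k + 1) := sub_nonneg.2 (hα _ hk)
    calc (1 - α (k + 1)) * D (k + 1)
        ≤ (1 - α (k + 1)) * ((1 - α k) * D k + W k) :=
          mul_le_mul_of_nonneg_left (hD k (by omega)) hα'
      _ ≤ (1 - α (k + 1)) * (Γ k * ∑ τ ∈ range k, W τ / Γ τ + W k) :=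
          mul_le_mul_of_nonneg_left (by linarith [ih (by omega)]) hα'
      _ = Γ (k + 1) * ∑ τ ∈ range (k + 1), W τ / Γ τ := by
          rw [hΓ k hk, sum_range_succ]
          field_simp [(hΓpos k (by omega)).ne']

theorem norm_sub_sq_le_of_iterates {x xt z d : ℕ → E} {α Γ γ lam : ℕ → ℝ} {T : ℕ}
    (hinit : xt 0 = x 0)
    (hz : ∀ k < T, z (k + 1) = (1 - α k) • xt k + α k • x k)
    (hx : ∀ k < T, x (k + 1) = x k - γ k • d k)
    (hxt : ∀ k < T, xt (k + 1) = z (k + 1) - lam k • d k)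
    (hα : ∀ k < T, α k ∈ Set.Ioc 0 1) (hΓpos : ∀ k < T, 0 < Γ k)
    (hΓ : ∀ k, k + 1 < T → Γ (k + 1) = (1 - α (k + 1)) * Γ k) :
    ∀ k < T, ‖x k - z (k + 1)‖ ^ 2 ≤
      Γ k * ∑ τ ∈ range k, (lam τ - γ τ) ^ 2 / α τ * ‖d τ‖ ^ 2 / Γ τ := by
  have hrec : ∀ k < T, ‖x (k + 1) - xt (k + 1)‖ ^ 2 ≤
      (1 - α k) * ‖x k - xt k‖ ^ 2 + (lam k - γ k) ^ 2 / α k * ‖d k‖ ^ 2 := fun k hk => by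
    have hdiff : x (k + 1) - xt (k + 1) = (1 - α k) • (x k - xt k) + (lam k - γ k) • d k := by
      rw [hx k hk, hxt k hk, hz k hk]; module
    rw [hdiff]
    exact norm_one_sub_smul_add_smul_sq_le_s9 (hα k hk).1 (hα k hk).2 _ _ _
  have hacc := one_sub_mul_le_mul_sum_div_of_le_one_sub_mul_add
    (D := fun k => ‖x k - xt k‖ ^ 2) (by simp [hinit]) hrec (fun k hk => (hα k hk).2) hΓpos hΓ
  intro k hk
  obtain ⟨hα₀, hα₁⟩ := hα k hk
  calc ‖x k - z (k + 1)‖ ^ 2 = (1 - α k) ^ 2 * ‖x k - xt k‖ ^ 2 := by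
        rw [hz k hk, show x k - ((1 - α k) • xt k + α k • x k) = (1 - α k) • (x k - xt k) by
          module, norm_smul, mul_pow, Real.norm_eq_abs, sq_abs]
    _ ≤ (1 - α k) * ‖x k - xt k‖ ^ 2 := by gcongr; nlinarith
    _ ≤ _ := hacc k hk

theorem sum_range_mul_sum_range_le_sum_mul_sum_Icc {Γ a : ℕ → ℝ} {T : ℕ}
    (hΓ : ∀ k < T, 0 ≤ Γ k) (ha : ∀ k < T, 0 ≤ a k) :
    ∑ k ∈ range T, Γ k * ∑ τ ∈ range k, a τ ≤
      ∑ τ ∈ range T, a τ * ∑ k ∈ Icc τ (T - 1), Γ k := by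
  have hswap : ∑ k ∈ range T, Γ k * ∑ τ ∈ range k, a τ =
      ∑ τ ∈ range T, a τ * ∑ k ∈ Ico (τ + 1) T, Γ k := by
    simp only [mul_sum, range_eq_Ico]
    rw [← sum_Ico_Ico_comm']
    simp only [mul_comm]
  rw [hswap]
  refine sum_le_sum fun τ hτ => mul_le_mul_of_nonneg_left ?_ (ha τ (mem_range.1 hτ))
  refine sum_le_sum_of_subset_of_nonneg (fun k hk => ?_) fun k hk _ => hΓ k ?_
  · simp only [mem_Ico, mem_Icc] at hk ⊢; omega
  · simp only [mem_Icc] at hk; have := mem_range.1 hτ; omega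

theorem sum_le_of_le_add_mul_sum_range {Δ b Γ a : ℕ → ℝ} {T : ℕ} {K : ℝ} (hK : 0 ≤ K)
    (hΓ : ∀ k < T, 0 ≤ Γ k) (ha : ∀ k < T, 0 ≤ a k)
    (hΔ : ∀ k < T, Δ k ≤ b k + K * (Γ k * ∑ τ ∈ range k, a τ)) :
    ∑ k ∈ range T, Δ k ≤ ∑ k ∈ range T, (b k + K * (a k * ∑ j ∈ Icc k (T - 1), Γ j)) := calc
  _ ≤ ∑ k ∈ range T, (b k + K * (Γ k * ∑ τ ∈ range k, a τ)) :=
      sum_le_sum fun k hk => hΔ k (mem_range.1 hk)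
  _ ≤ _ := by
      simp only [sum_add_distrib, ← mul_sum]
      exact add_le_add le_rfl (mul_le_mul_of_nonneg_left
        (sum_range_mul_sum_range_le_sum_mul_sum_Icc hΓ ha) hK)

theorem pos_of_eq_one_sub_mul {α Γ : ℕ → ℝ} {T : ℕ} (hΓ₀ : Γ 0 = 1)
    (hΓ : ∀ k, 1 ≤ k → Γ k = (1 - α k) * Γ (k - 1)) (hα : ∀ k, 1 ≤ k → k < T → α k < 1) :
    ∀ k < T, 0 < Γ k := by
  intro k
  induction k with
  | zero => intro _; rw [hΓ₀]; exact one_pos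
  | succ k ih =>
    intro hk
    rw [hΓ (k + 1) k.succ_pos, Nat.add_sub_cancel]
    exact mul_pos (sub_pos.2 (hα _ k.succ_pos hk)) (ih (by omega))

end

theorem stmt9_general {n m : ℕ}
    (L : EuclideanSpace ℝ (Fin n) → EuclideanSpace ℝ (Fin m) → ℝ)
    (gx : EuclideanSpace ℝ (Fin n) → EuclideanSpace ℝ (Fin m) → EuclideanSpace ℝ (Fin n))
    (hgx : ∀ x y, HasGradientAt (fun x' => L x' y) (gx x y) x)
    (Lxx : ℝ) (hLxx : 0 ≤ Lxx)
    (hLip : ∀ x xb y, ‖gx x y - gx xb y‖ ≤ Lxx * ‖x - xb‖)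
    (μ : ℝ)
    (hPL : ∀ x y, μ * (L x y - ⨅ x', L x' y) ≤ 1 / 2 * ‖gx x y‖ ^ 2)
    (T : ℕ)
    (α Γ γ lam : ℕ → ℝ)
    (hα0 : α 0 = 1) (hα : ∀ k, 1 ≤ k → k ≤ T - 1 → α k ∈ Set.Ioo (0 : ℝ) 1)
    (hΓ0 : Γ 0 = 1) (hΓ : ∀ k, 1 ≤ k → Γ k = (1 - α k) * Γ (k - 1))
    (hγ : ∀ k, 0 < γ k)
    (x xt z : ℕ → EuclideanSpace ℝ (Fin n)) (y : ℕ → EuclideanSpace ℝ (Fin m))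
    (hinit : xt 0 = x 0)
    (hz : ∀ k < T, z (k + 1) = (1 - α k) • xt k + α k • x k)
    (hx : ∀ k < T, x (k + 1) = x k - γ k • gx (z (k + 1)) (y (k + 1)))
    (hxt : ∀ k < T, xt (k + 1) = z (k + 1) - lam k • gx (z (k + 1)) (y (k + 1)))
    (C : ℕ → ℝ)
    (hC : ∀ k, C k = 1 - Lxx * γ k -
        Lxx * (γ k - lam k) ^ 2 / (2 * α k * Γ k * γ k) * ∑ τ ∈ Finset.Icc k (T - 1), Γ τ)
    (hCpos : ∀ k, 0 ≤ γ k * C k) :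
    ∑ k ∈ Finset.range T, (L (x (k + 1)) (y (k + 1)) - L (x k) (y (k + 1))) ≤
      - ∑ k ∈ Finset.range T,
          γ k * C k * μ * (L (z (k + 1)) (y (k + 1)) - ⨅ x', L x' (y (k + 1)))
      - ∑ k ∈ Finset.range T, γ k * C k / 2 * ‖gx (z (k + 1)) (y (k + 1))‖ ^ 2 := by
  set d := fun k => gx (z (k + 1)) (y (k + 1))
  set a := fun τ => (lam τ - γ τ) ^ 2 / α τ * ‖d τ‖ ^ 2 / Γ τ
  have hαT : ∀ k < T, α k ∈ Set.Ioc 0 1 := fun k hk => by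
    rcases Nat.eq_zero_or_pos k with rfl | hk₀
    · rw [hα0]; exact ⟨one_pos, le_rfl⟩
    · exact Set.Ioo_subset_Ioc_self (hα k hk₀ (by omega))
  have hΓpos := pos_of_eq_one_sub_mul (T := T) hΓ0 hΓ fun k h₁ hk => (hα k h₁ (by omega)).2
  have hgap := norm_sub_sq_le_of_iterates hinit hz hx hxt hαT hΓpos fun k _ => by
    rw [hΓ (k + 1) k.succ_pos, Nat.add_sub_cancel]
  have hstep : ∀ k < T, L (x (k + 1)) (y (k + 1)) - L (x k) (y (k + 1)) ≤
      -(γ k * (1 - Lxx * γ k)) * ‖d k‖ ^ 2 + Lxx / 2 * (Γ k * ∑ τ ∈ range k, a τ) :=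
    fun k hk => hx k hk ▸ (image_sub_smul_sub_le_of_lipschitzWith_gradient (K := ⟨Lxx, hLxx⟩)
      (hgx · _) (lipschitzWith_iff_norm_sub_le.2 (hLip · · _)) (hγ k).le _ _).trans
      (add_le_add le_rfl (mul_le_mul_of_nonneg_left (hgap k hk) (by positivity)))
  have hcoef : ∀ k < T, -(γ k * (1 - Lxx * γ k)) * ‖d k‖ ^ 2 +
      Lxx / 2 * (a k * ∑ j ∈ Icc k (T - 1), Γ j) = -(γ k * C k) * ‖d k‖ ^ 2 := fun k hk => by
    have := (hαT k hk).1.ne'; have := (hΓpos k hk).ne'; have := (hγ k).ne'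
    rw [hC k]; simp only [a]; field_simp; ring
  calc _ ≤ ∑ k ∈ range T, (-(γ k * (1 - Lxx * γ k)) * ‖d k‖ ^ 2 +
          Lxx / 2 * (a k * ∑ j ∈ Icc k (T - 1), Γ j)) :=
        sum_le_of_le_add_mul_sum_range (by positivity) (fun k hk => (hΓpos k hk).le)
          (fun k hk => div_nonneg (mul_nonneg (div_nonneg (sq_nonneg _) (hαT k hk).1.le)
            (sq_nonneg _)) (hΓpos k hk).le) hstep
    _ = ∑ k ∈ range T, -(γ k * C k) * ‖d k‖ ^ 2 :=
        sum_congr rfl fun k hk => hcoef k (mem_range.1 hk)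
    _ ≤ ∑ k ∈ range T, (-(γ k * C k * μ * (L (z (k + 1)) (y (k + 1)) - ⨅ x', L x' (y (k + 1))))
          - γ k * C k / 2 * ‖d k‖ ^ 2) := sum_le_sum fun k _ => by
      nlinarith [mul_le_mul_of_nonneg_left (hPL (z (k + 1)) (y (k + 1))) (hCpos k)]
    _ = _ := by rw [sum_sub_distrib, sum_neg_distrib]

/-- Cumulative descent inequality for the PDM primal iterates under the one-sided PL
condition: `∑ (𝓛(x_{k+1},y_{k+1}) − 𝓛(x_k,y_{k+1})) ≤
−∑ γₖCₖμ(𝓛(z_{k+1},y_{k+1}) − inf_{x'}𝓛(x',y_{k+1})) − ∑ (γₖCₖ/2)‖∇ₓ𝓛(z_{k+1},y_{k+1})‖²`. -/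
theorem stmt9 {n m : ℕ}
    (L : EuclideanSpace ℝ (Fin n) → EuclideanSpace ℝ (Fin m) → ℝ)
    (gx : EuclideanSpace ℝ (Fin n) → EuclideanSpace ℝ (Fin m) → EuclideanSpace ℝ (Fin n))
    (hgx : ∀ x y, HasGradientAt (fun x' => L x' y) (gx x y) x)
    (Lxx : ℝ) (hLxx : 0 ≤ Lxx)
    (hLip : ∀ x xb y, ‖gx x y - gx xb y‖ ≤ Lxx * ‖x - xb‖)
    (μ : ℝ) (hμ : 0 < μ)
    (hPL : ∀ x y, μ * (L x y - ⨅ x', L x' y) ≤ 1 / 2 * ‖gx x y‖ ^ 2)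
    (hattain : ∀ y, ∃ xs, ∀ x', L xs y ≤ L x' y)
    (T : ℕ) (hT : 1 ≤ T)
    (α Γ γ lam : ℕ → ℝ)
    (hα0 : α 0 = 1) (hα : ∀ k, 1 ≤ k → k ≤ T - 1 → α k ∈ Set.Ioo (0 : ℝ) 1)
    (hΓ0 : Γ 0 = 1) (hΓ : ∀ k, 1 ≤ k → Γ k = (1 - α k) * Γ (k - 1))
    (hγ : ∀ k, 0 < γ k) (hlam : ∀ k, 0 < lam k)
    (x xt z : ℕ → EuclideanSpace ℝ (Fin n)) (y : ℕ → EuclideanSpace ℝ (Fin m))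
    (hinit : xt 0 = x 0)
    (hz : ∀ k < T, z (k + 1) = (1 - α k) • xt k + α k • x k)
    (hx : ∀ k < T, x (k + 1) = x k - γ k • gx (z (k + 1)) (y (k + 1)))
    (hxt : ∀ k < T, xt (k + 1) = z (k + 1) - lam k • gx (z (k + 1)) (y (k + 1)))
    (C : ℕ → ℝ)
    (hC : ∀ k, C k = 1 - Lxx * γ k -
        Lxx * (γ k - lam k) ^ 2 / (2 * α k * Γ k * γ k) * ∑ τ ∈ Finset.Icc k (T - 1), Γ τ)
    (hCpos : ∀ k, 0 ≤ γ k * C k) :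
    ∑ k ∈ Finset.range T, (L (x (k + 1)) (y (k + 1)) - L (x k) (y (k + 1))) ≤
      - ∑ k ∈ Finset.range T,
          γ k * C k * μ * (L (z (k + 1)) (y (k + 1)) - ⨅ x', L x' (y (k + 1)))
      - ∑ k ∈ Finset.range T, γ k * C k / 2 * ‖gx (z (k + 1)) (y (k + 1))‖ ^ 2 :=
  stmt9_general L gx hgx Lxx hLxx hLip μ hPL T α Γ γ lam hα0 hα hΓ0 hΓ hγ x xt z y hinit hz hx hxt C
    hC hCpos
end
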